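/- arXiv:2603.04681 — 2 statements merged into one kernel-verified Lean document; each statement's English description precedes it below -/
import Mathlib

section
/- Suppose the kernel K satisfies Assumption A.2′, and let f = g ∘ K where g is Lipschitz continuous on the range of K with g(0) = 0. Then for any fixed j ∈ ℕ and any 0 ≤ a ≤ b ≤ 1 there exists a constant C < ∞ such that, uniformly in x ∈ [0,1] and for all sufficiently large T, both |T^{-1} Σ_{i: i/T∈[a,b]} f((i/T − x)/h)((i/T − x)/h)^j − ∫_a^b f((u − x)/h)((u − x)/h)^j du| ≤ C/T and |T^{-1} Σ_{i: i/T∈[a,b]} f((i/T − x)/h)|(i/T − x)/h|^j − ∫_a^b f((u − x)/h)|(u − x)/h|^j du| ≤ C/T, where h = h_T > 0 satisfies h → 0 and Th → ∞. -/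
/-!
Cut `(0, 1]` into the grid cells `((i - 1)/T, i/T]`. On a cell lying inside `[a, b]` the Riemann
term `T⁻¹ F(i/T)` and the integral of `F` over the cell differ by at most `T⁻¹` times the
oscillation of `F` on the cell; at most four further cells (those whose closure contains `a` or
`b`) contribute, each at most `2M/T`. For `F u = f ((u - x)/h)` with `f` supported in `[-L, L]`,
bounded by `M` and `Λ`-Lipschitz there, the oscillation is at most `Λ/(Th)` on the at most
`2LhT` cells inside the window `[x - Lh, x + Lh]`, zero on cells away from it, and at most `2M`
on the at most four cells meeting its endpoints. Altogether the error is `(2LΛ + 16M)/T`,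
uniformly in `x` and `h`. The functions `g (K t) * t ^ j` and `g (K t) * |t| ^ j` are of this
kind: they vanish off `[-L, L]`, and as products of Lipschitz functions on a compact interval they
are Lipschitz and bounded on it.
-/

open Filter Set MeasureTheory Function
open scoped Classical NNReal

lemma card_le_of_forall_natCast_mem_Icc {s : Finset ℕ} {α β : ℝ} (h : 0 ≤ β - α + 1)
    (hs : ∀ i ∈ s, (i : ℝ) ∈ Icc α β) : (s.card : ℝ) ≤ β - α + 1 := by
  have hmaps : MapsTo (fun i : ℕ => (i : ℤ)) s (Finset.Icc ⌈α⌉ ⌊β⌋) := fun i hi => by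
    obtain ⟨h₁, h₂⟩ := hs i hi
    rw [Finset.coe_Icc, mem_Icc, Int.ceil_le, Int.le_floor]
    exact ⟨by exact_mod_cast h₁, by exact_mod_cast h₂⟩
  have hcard := Finset.card_le_card_of_injOn _ hmaps Nat.cast_injective.injOn
  rw [Int.card_Icc] at hcard
  calc (s.card : ℝ) ≤ (((⌊β⌋ + 1 - ⌈α⌉).toNat : ℤ) : ℝ) := by exact_mod_cast hcard
    _ = max ((⌊β⌋ : ℝ) + 1 - ⌈α⌉) 0 := by rw [Int.toNat_eq_max]; push_cast; rfl
    _ ≤ β - α + 1 := max_le (by linarith [Int.floor_le β, Int.le_ceil α]) h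

lemma mem_Icc_or_mem_Icc_of_not_subset_of_not_disjoint {α : Type*} [LinearOrder α]
    {c d a b : α} (hsub : ¬Icc c d ⊆ Icc a b) (hdisj : ¬Disjoint (Icc c d) (Icc a b)) :
    a ∈ Icc c d ∨ b ∈ Icc c d := by
  obtain ⟨p, hp, hp'⟩ := not_disjoint_iff.1 hdisj
  obtain ⟨q, hq, hq'⟩ := not_subset.1 hsub
  rw [mem_Icc, not_and_or, not_le, not_le] at hq'
  rcases hq' with hq' | hq'
  · exact Or.inl ⟨hq.1.trans hq'.le, hp'.1.trans hp.2⟩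
  · exact Or.inr ⟨hp.1.trans hp'.2, hq'.le.trans hq.2⟩

lemma sub_div_mem_Icc_neg_iff {L h x v : ℝ} (hh : 0 < h) :
    (v - x) / h ∈ Icc (-L) L ↔ v ∈ Icc (x - L * h) (x + L * h) := by
  simp only [mem_Icc, le_div_iff₀ hh, div_le_iff₀ hh]
  constructor <;> rintro ⟨h₁, h₂⟩ <;> constructor <;> linarith

lemma measurable_of_support_subset_of_continuousOn {f : ℝ → ℝ} {s : Set ℝ}
    (hs : MeasurableSet s) (hsupp : support f ⊆ s) (hf : ContinuousOn f s) : Measurable f := by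
  have hpiece : s.piecewise f 0 = f := by
    ext t
    by_cases ht : t ∈ s
    · exact piecewise_eq_of_mem _ _ _ ht
    · rw [piecewise_eq_of_notMem _ _ _ ht, Pi.zero_apply, notMem_support.1 (mt (@hsupp t) ht)]
  exact hpiece ▸ hf.measurable_piecewise continuousOn_const hs

lemma LipschitzOnWith.mul_of_abs_le {α : Type*} [PseudoMetricSpace α] {s : Set α}
    {f g : α → ℝ} {Kf Kg A B : ℝ≥0} (hf : LipschitzOnWith Kf f s) (hg : LipschitzOnWith Kg g s)
    (hfA : ∀ x ∈ s, |f x| ≤ A) (hgB : ∀ x ∈ s, |g x| ≤ B) :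
    LipschitzOnWith (Kf * B + A * Kg) (fun x => f x * g x) s := by
  refine LipschitzOnWith.of_dist_le_mul fun x hx y hy => ?_
  have hfxy : |f x - f y| ≤ Kf * dist x y := hf.dist_le_mul x hx y hy
  have hgxy : |g x - g y| ≤ Kg * dist x y := hg.dist_le_mul x hx y hy
  calc dist (f x * g x) (f y * g y) = |(f x - f y) * g x + f y * (g x - g y)| := by
        rw [Real.dist_eq]
        ring_nf
    _ ≤ |f x - f y| * |g x| + |f y| * |g x - g y| := by
        rw [← abs_mul, ← abs_mul]
        exact abs_add_le _ _
    _ ≤ Kf * dist x y * B + A * (Kg * dist x y) := by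
        gcongr
        exacts [hgB x hx, hfA y hy]
    _ = ↑(Kf * B + A * Kg) * dist x y := by
        push_cast
        ring

lemma IsCompact.exists_lipschitzOnWith_mul {α : Type*} [PseudoMetricSpace α] {s : Set α}
    (hs : IsCompact s) {f g : α → ℝ} {Kf Kg : ℝ≥0} (hf : LipschitzOnWith Kf f s)
    (hg : LipschitzOnWith Kg g s) : ∃ K, LipschitzOnWith K (fun x => f x * g x) s := by
  obtain ⟨A, hA⟩ := hs.exists_bound_of_continuousOn hf.continuousOn
  obtain ⟨B, hB⟩ := hs.exists_bound_of_continuousOn hg.continuousOn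
  exact ⟨_, hf.mul_of_abs_le hg (A := A.toNNReal) (B := B.toNNReal)
    (fun x hx => (hA x hx).trans (Real.le_coe_toNNReal A))
    (fun x hx => (hB x hx).trans (Real.le_coe_toNNReal B))⟩

section Grid

variable {T i : ℕ}

def gridCell (T i : ℕ) : Set ℝ := Ioc (((i : ℝ) - 1) / T) (i / T)

def closedGridCell (T i : ℕ) : Set ℝ := Icc (((i : ℝ) - 1) / T) (i / T)

lemma gridCell_subset_closedGridCell : gridCell T i ⊆ closedGridCell T i := Ioc_subset_Icc_self

lemma natCast_div_mem_gridCell (hT : 0 < T) : (i : ℝ) / T ∈ gridCell T i :=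
  ⟨div_lt_div_of_pos_right (by linarith) (by exact_mod_cast hT), le_rfl⟩

lemma gridCell_subset_Ioc_zero_one (hi : i ∈ Finset.Icc 1 T) : gridCell T i ⊆ Ioc 0 1 := by
  obtain ⟨h₁, h₂⟩ := Finset.mem_Icc.1 hi
  refine Ioc_subset_Ioc (div_nonneg ?_ T.cast_nonneg) (div_le_one_of_le₀ ?_ T.cast_nonneg)
  · simpa using (Nat.one_le_cast (α := ℝ)).2 h₁
  · exact_mod_cast h₂

lemma measureReal_gridCell (T i : ℕ) : volume.real (gridCell T i) = (T : ℝ)⁻¹ := by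
  rw [gridCell, Real.volume_real_Ioc, show (i : ℝ) / T - ((i : ℝ) - 1) / T = (T : ℝ)⁻¹ by ring]
  exact max_eq_left (inv_nonneg.2 T.cast_nonneg)

lemma pairwise_disjoint_gridCell (T : ℕ) : Pairwise (Disjoint on gridCell T) := by
  refine (pairwise_disjoint_on _).2 fun i i' hii' => Ioc_disjoint_Ioc_of_le ?_
  have : (i : ℝ) + 1 ≤ i' := by exact_mod_cast hii'
  exact div_le_div_of_nonneg_right (by linarith) T.cast_nonneg

lemma Ioc_zero_one_subset_biUnion_gridCell (hT : 0 < T) :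
    Ioc (0 : ℝ) 1 ⊆ ⋃ i ∈ Finset.Icc 1 T, gridCell T i := by
  rintro u ⟨hu₀, hu₁⟩
  have hT' : (0 : ℝ) < T := by exact_mod_cast hT
  have huT : 0 < u * T := by positivity
  refine mem_iUnion₂.2 ⟨⌈u * T⌉₊, Finset.mem_Icc.2 ⟨Nat.one_le_ceil_iff.2 huT,
    Nat.ceil_le.2 (by nlinarith)⟩, ?_, ?_⟩
  · rw [div_lt_iff₀ hT']
    linarith [Nat.ceil_lt_add_one huT.le]
  · rw [le_div_iff₀ hT']
    exact Nat.le_ceil _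

lemma setIntegral_Icc_eq_sum_gridCell {F : ℝ → ℝ} {a b : ℝ} (hT : 0 < T) (ha : 0 ≤ a)
    (hb : b ≤ 1) (hF : IntegrableOn F (Ioc 0 1)) :
    ∫ u in Icc a b, F u = ∑ i ∈ Finset.Icc 1 T, ∫ u in Ioc a b ∩ gridCell T i, F u := by
  have hcover : Ioc a b = ⋃ i ∈ Finset.Icc 1 T, Ioc a b ∩ gridCell T i := by
    rw [← inter_iUnion₂, inter_eq_left.2]
    exact (Ioc_subset_Ioc ha hb).trans (Ioc_zero_one_subset_biUnion_gridCell hT)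
  have hsplit := integral_biUnion_finset (Finset.Icc 1 T) (s := fun i => Ioc a b ∩ gridCell T i)
    (fun i _ => measurableSet_Ioc.inter measurableSet_Ioc)
    (fun i _ i' _ hii' => (pairwise_disjoint_gridCell T hii').mono inter_subset_right
      inter_subset_right) fun i _ => hF.mono_set (inter_subset_left.trans (Ioc_subset_Ioc ha hb))
  rw [← hcover] at hsplit
  rw [integral_Icc_eq_integral_Ioc, hsplit]

lemma card_filter_mem_closedGridCell_le_two (hT : 0 < T) (s : Finset ℕ) (y : ℝ) :
    (({i ∈ s | y ∈ closedGridCell T i}).card : ℝ) ≤ 2 := by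
  have hT' : (0 : ℝ) < T := by exact_mod_cast hT
  have := card_le_of_forall_natCast_mem_Icc (s := {i ∈ s | y ∈ closedGridCell T i})
    (α := y * T) (β := y * T + 1) (by norm_num) fun i hi => by
      obtain ⟨h₁, h₂⟩ := (Finset.mem_filter.1 hi).2
      rw [div_le_iff₀ hT'] at h₁
      rw [le_div_iff₀ hT'] at h₂
      exact ⟨h₂, by linarith⟩
  linarith

lemma sum_ite_mem_closedGridCell_le (hT : 0 < T) (s : Finset ℕ) (y z : ℝ) {m : ℝ}
    (hm : 0 ≤ m) :
    ∑ i ∈ s, (if y ∈ closedGridCell T i ∨ z ∈ closedGridCell T i then m else 0) ≤ 4 * m := by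
  rw [Finset.sum_ite, Finset.sum_const_zero, add_zero, Finset.sum_const, nsmul_eq_mul,
    Finset.filter_or]
  have hunion : (({i ∈ s | y ∈ closedGridCell T i} ∪ {i ∈ s | z ∈ closedGridCell T i}).card : ℝ)
      ≤ ({i ∈ s | y ∈ closedGridCell T i}).card + ({i ∈ s | z ∈ closedGridCell T i}).card := by
    exact_mod_cast Finset.card_union_le _ _
  have hy := card_filter_mem_closedGridCell_le_two hT s y
  have hz := card_filter_mem_closedGridCell_le_two hT s z
  exact mul_le_mul_of_nonneg_right (by linarith) hm

lemma card_filter_closedGridCell_subset_le (hT : 0 < T) (s : Finset ℕ) {α β : ℝ}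
    (hαβ : α ≤ β) : (({i ∈ s | closedGridCell T i ⊆ Icc α β}).card : ℝ) ≤ (β - α) * T := by
  have hT' : (0 : ℝ) < T := by exact_mod_cast hT
  have := card_le_of_forall_natCast_mem_Icc (s := {i ∈ s | closedGridCell T i ⊆ Icc α β})
    (α := α * T + 1) (β := β * T) (by nlinarith) fun i hi => by
      have hsub := (Finset.mem_filter.1 hi).2
      rw [closedGridCell, Icc_subset_Icc_iff
        (div_le_div_of_nonneg_right (by linarith) T.cast_nonneg),
        le_div_iff₀ hT', div_le_iff₀ hT'] at hsub
      exact ⟨by linarith, hsub.2⟩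
  linarith

lemma abs_inv_mul_sub_setIntegral_gridCell_le {F : ℝ → ℝ} {ω : ℝ}
    (hF : IntegrableOn F (gridCell T i)) (hω : ∀ u ∈ gridCell T i, |F (i / T) - F u| ≤ ω) :
    |(T : ℝ)⁻¹ * F (i / T) - ∫ u in gridCell T i, F u| ≤ ω / T := by
  have hfin : volume (gridCell T i) < ⊤ := measure_Ioc_lt_top
  have hconst : (T : ℝ)⁻¹ * F (i / T) = ∫ _ in gridCell T i, F (i / T) := by
    rw [setIntegral_const, measureReal_gridCell, smul_eq_mul]
  rw [hconst, ← integral_sub (μ := volume.restrict (gridCell T i))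
    (integrableOn_const (C := F (i / T)) hfin.ne) hF]
  calc ‖∫ u in gridCell T i, (F (i / T) - F u)‖ ≤ ω * volume.real (gridCell T i) :=
        norm_setIntegral_le_of_norm_le_const hfin hω
    _ = ω / T := by rw [measureReal_gridCell, div_eq_mul_inv]

lemma abs_setIntegral_inter_gridCell_le {F : ℝ → ℝ} {M : ℝ} {S : Set ℝ}
    (hFM : ∀ u, |F u| ≤ M) : |∫ u in S ∩ gridCell T i, F u| ≤ M / T :=
  calc ‖∫ u in S ∩ gridCell T i, F u‖ ≤ M * volume.real (S ∩ gridCell T i) :=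
        norm_setIntegral_le_of_norm_le_const
          ((measure_mono inter_subset_right).trans_lt measure_Ioc_lt_top) fun u _ => hFM u
    _ ≤ M * volume.real (gridCell T i) :=
        mul_le_mul_of_nonneg_left (measureReal_mono inter_subset_right measure_Ioc_lt_top.ne)
          ((abs_nonneg _).trans (hFM 0))
    _ = M / T := by rw [measureReal_gridCell, div_eq_mul_inv]

lemma abs_riemannTerm_sub_setIntegral_le {F : ℝ → ℝ} {M ω a b : ℝ} (hT : 0 < T)
    (hF : IntegrableOn F (gridCell T i)) (hFM : ∀ u, |F u| ≤ M)
    (hω : ∀ u ∈ gridCell T i, |F (i / T) - F u| ≤ ω) :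
    |(if (i : ℝ) / T ∈ Icc a b then (T : ℝ)⁻¹ * F (i / T) else 0) -
        ∫ u in Ioc a b ∩ gridCell T i, F u| ≤
      ω / T + if a ∈ closedGridCell T i ∨ b ∈ closedGridCell T i then 2 * M / T else 0 := by
  have hd := natCast_div_mem_gridCell (i := i) hT
  have hω₀ : 0 ≤ ω / T := div_nonneg ((abs_nonneg _).trans (hω _ hd)) T.cast_nonneg
  have hM : 0 ≤ M := (abs_nonneg _).trans (hFM 0)
  have hM' : 0 ≤ 2 * M / T := by positivity
  by_cases hsub : closedGridCell T i ⊆ Icc a b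
  · have hcell : Ioc a b ∩ gridCell T i = gridCell T i := by
      refine inter_eq_right.2 fun u hu => ⟨?_, (hsub (gridCell_subset_closedGridCell hu)).2⟩
      exact (hsub ⟨le_rfl, (gridCell_subset_closedGridCell hu).1.trans hu.2⟩).1.trans_lt hu.1
    rw [if_pos (hsub (gridCell_subset_closedGridCell hd)), hcell]
    exact (abs_inv_mul_sub_setIntegral_gridCell_le hF hω).trans
      (le_add_of_nonneg_right (by split_ifs <;> linarith))
  by_cases hdisj : Disjoint (closedGridCell T i) (Icc a b)
  · have hcell : Ioc a b ∩ gridCell T i = ∅ :=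
      (hdisj.mono gridCell_subset_closedGridCell Ioc_subset_Icc_self).symm.inter_eq
    rw [if_neg (hdisj.notMem_of_mem_left (gridCell_subset_closedGridCell hd)), hcell]
    simp only [Measure.restrict_empty, integral_zero_measure, sub_zero, abs_zero]
    split_ifs <;> linarith
  rw [if_pos (show a ∈ closedGridCell T i ∨ b ∈ closedGridCell T i from
    mem_Icc_or_mem_Icc_of_not_subset_of_not_disjoint hsub hdisj)]
  have hterm : |if (i : ℝ) / T ∈ Icc a b then (T : ℝ)⁻¹ * F (i / T) else 0| ≤ M / T := by
    split_ifs
    · rw [abs_mul, abs_inv, Nat.abs_cast, inv_mul_eq_div]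
      exact div_le_div_of_nonneg_right (hFM _) T.cast_nonneg
    · simpa using by positivity
  calc _ ≤ _ := abs_sub _ _
    _ ≤ M / T + M / T := add_le_add hterm (abs_setIntegral_inter_gridCell_le hFM)
    _ = 0 + 2 * M / T := by ring
    _ ≤ ω / T + 2 * M / T := by gcongr

theorem abs_riemannSum_sub_setIntegral_le {F : ℝ → ℝ} {M : ℝ} {ω : ℕ → ℝ} {a b : ℝ}
    (hT : 0 < T) (ha : 0 ≤ a) (hb : b ≤ 1) (hF : IntegrableOn F (Ioc 0 1))
    (hFM : ∀ u, |F u| ≤ M)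
    (hω : ∀ i ∈ Finset.Icc 1 T, ∀ u ∈ gridCell T i, |F (i / T) - F u| ≤ ω i) :
    |(T : ℝ)⁻¹ * ∑ i ∈ (Finset.Icc 1 T).filter (fun i : ℕ => (i : ℝ) / T ∈ Icc a b), F (i / T) -
        ∫ u in Icc a b, F u| ≤ (∑ i ∈ Finset.Icc 1 T, ω i + 8 * M) / T := by
  rw [setIntegral_Icc_eq_sum_gridCell hT ha hb hF, Finset.mul_sum, Finset.sum_filter,
    ← Finset.sum_sub_distrib]
  have hM : 0 ≤ 2 * M / T := div_nonneg (by linarith [(abs_nonneg _).trans (hFM 0)])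
    T.cast_nonneg
  calc _ ≤ ∑ i ∈ Finset.Icc 1 T, (ω i / T +
          if a ∈ closedGridCell T i ∨ b ∈ closedGridCell T i then 2 * M / T else 0) :=
        (Finset.abs_sum_le_sum_abs _ _).trans <| Finset.sum_le_sum fun i hi =>
          abs_riemannTerm_sub_setIntegral_le hT (hF.mono_set (gridCell_subset_Ioc_zero_one hi))
            hFM (hω i hi)
    _ ≤ (∑ i ∈ Finset.Icc 1 T, ω i) / T + 4 * (2 * M / T) := by
        rw [Finset.sum_add_distrib, Finset.sum_div]
        gcongr
        exact sum_ite_mem_closedGridCell_le hT _ a b hM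
    _ = _ := by ring

noncomputable def gridWeight (T : ℕ) (α β ℓ m : ℝ) (i : ℕ) : ℝ :=
  if closedGridCell T i ⊆ Icc α β then ℓ
  else if Disjoint (closedGridCell T i) (Icc α β) then 0 else m

lemma sum_gridWeight_le (hT : 0 < T) (s : Finset ℕ) {α β ℓ m : ℝ} (hαβ : α ≤ β) (hℓ : 0 ≤ ℓ)
    (hm : 0 ≤ m) : ∑ i ∈ s, gridWeight T α β ℓ m i ≤ (β - α) * T * ℓ + 4 * m := by
  have hsplit : ∀ i, gridWeight T α β ℓ m i ≤ (if closedGridCell T i ⊆ Icc α β then ℓ else 0) +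
      if α ∈ closedGridCell T i ∨ β ∈ closedGridCell T i then m else 0 := by
    intro i
    by_cases hsub : closedGridCell T i ⊆ Icc α β
    · simp only [gridWeight, if_pos hsub]
      split_ifs <;> linarith
    by_cases hdisj : Disjoint (closedGridCell T i) (Icc α β)
    · simp only [gridWeight, if_neg hsub, if_pos hdisj]
      split_ifs <;> linarith
    simp only [gridWeight, if_neg hsub, if_neg hdisj, zero_add,
      if_pos (show α ∈ closedGridCell T i ∨ β ∈ closedGridCell T i from
        mem_Icc_or_mem_Icc_of_not_subset_of_not_disjoint hsub hdisj), le_refl]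
  calc _ ≤ ∑ i ∈ s, ((if closedGridCell T i ⊆ Icc α β then ℓ else 0) +
          if α ∈ closedGridCell T i ∨ β ∈ closedGridCell T i then m else 0) :=
        Finset.sum_le_sum fun i _ => hsplit i
    _ ≤ (β - α) * T * ℓ + 4 * m := by
        rw [Finset.sum_add_distrib, Finset.sum_ite, Finset.sum_const_zero, add_zero,
          Finset.sum_const, nsmul_eq_mul]
        exact add_le_add
          (mul_le_mul_of_nonneg_right (card_filter_closedGridCell_subset_le hT s hαβ) hℓ)
          (sum_ite_mem_closedGridCell_le hT s α β hm)

end Grid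

section Kernel

variable {f : ℝ → ℝ} {L : ℝ}

lemma abs_comp_sub_comp_le_gridWeight {M : ℝ} {Λ : ℝ≥0} {T i : ℕ} {h x u : ℝ}
    (hsupp : support f ⊆ Icc (-L) L) (hfM : ∀ t, |f t| ≤ M)
    (hf : LipschitzOnWith Λ f (Icc (-L) L)) (hT : 0 < T) (hh : 0 < h) (hu : u ∈ gridCell T i) :
    |f (((i : ℝ) / T - x) / h) - f ((u - x) / h)| ≤
      gridWeight T (x - L * h) (x + L * h) (Λ / (T * h)) (2 * M) i := by
  have hd := gridCell_subset_closedGridCell (natCast_div_mem_gridCell (i := i) hT)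
  have hu' := gridCell_subset_closedGridCell hu
  unfold gridWeight
  split_ifs with hsub hdisj
  · have hdu : (i : ℝ) / T - u ≤ (T : ℝ)⁻¹ := by
      have := hu.1
      linarith [show (i : ℝ) / T - ((i : ℝ) - 1) / T = (T : ℝ)⁻¹ by ring]
    calc |f (((i : ℝ) / T - x) / h) - f ((u - x) / h)|
        ≤ Λ * |((i : ℝ) / T - x) / h - (u - x) / h| :=
          hf.dist_le_mul _ ((sub_div_mem_Icc_neg_iff hh).2 (hsub hd)) _
            ((sub_div_mem_Icc_neg_iff hh).2 (hsub hu'))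
      _ = Λ * (((i : ℝ) / T - u) / h) := by
          rw [← sub_div, sub_sub_sub_cancel_right, abs_div, abs_of_nonneg (sub_nonneg.2 hu.2),
            abs_of_pos hh]
      _ ≤ Λ * ((T : ℝ)⁻¹ / h) := by gcongr
      _ = Λ / (T * h) := by ring
  · have hzero : ∀ v ∈ closedGridCell T i, f ((v - x) / h) = 0 := fun v hv =>
      notMem_support.1 fun hv' =>
        hdisj.notMem_of_mem_left hv ((sub_div_mem_Icc_neg_iff hh).1 (hsupp hv'))
    rw [hzero _ hd, hzero _ hu', sub_zero, abs_zero]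
  · calc _ ≤ |f (((i : ℝ) / T - x) / h)| + |f ((u - x) / h)| := abs_sub _ _
      _ ≤ 2 * M := by linarith [hfM (((i : ℝ) / T - x) / h), hfM ((u - x) / h)]

theorem abs_riemannSum_comp_sub_setIntegral_le {M : ℝ} {Λ : ℝ≥0} {T : ℕ} {h x a b : ℝ}
    (hL : 0 ≤ L) (hsupp : support f ⊆ Icc (-L) L) (hfM : ∀ t ∈ Icc (-L) L, |f t| ≤ M)
    (hf : LipschitzOnWith Λ f (Icc (-L) L)) (hT : 0 < T) (hh : 0 < h) (ha : 0 ≤ a)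
    (hb : b ≤ 1) :
    |(T : ℝ)⁻¹ * ∑ i ∈ (Finset.Icc 1 T).filter (fun i : ℕ => (i : ℝ) / T ∈ Icc a b),
        f (((i : ℝ) / T - x) / h) - ∫ u in Icc a b, f ((u - x) / h)| ≤
      (2 * L * Λ + 16 * M) / T := by
  have hM : 0 ≤ M := (abs_nonneg _).trans (hfM 0 ⟨by linarith, hL⟩)
  have hfM' : ∀ t, |f t| ≤ M := fun t => by
    by_cases ht : t ∈ Icc (-L) L
    · exact hfM t ht
    · rwa [notMem_support.1 (mt (@hsupp t) ht), abs_zero]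
  have hF : IntegrableOn (fun u => f ((u - x) / h)) (Ioc 0 1) := by
    have hmeas :=
      measurable_of_support_subset_of_continuousOn measurableSet_Icc hsupp hf.continuousOn
    exact Measure.integrableOn_of_bounded measure_Ioc_lt_top.ne
      (hmeas.comp (by fun_prop)).aestronglyMeasurable (ae_of_all _ fun u => hfM' _)
  have hweights := sum_gridWeight_le hT (Finset.Icc 1 T) (α := x - L * h) (β := x + L * h)
    (ℓ := Λ / (T * h)) (m := 2 * M) (by nlinarith) (by positivity) (by positivity)
  have hwindow : (x + L * h - (x - L * h)) * T * (Λ / (T * h)) = 2 * L * Λ := by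
    field_simp
    ring
  calc _ ≤ (∑ i ∈ Finset.Icc 1 T,
          gridWeight T (x - L * h) (x + L * h) (Λ / (T * h)) (2 * M) i + 8 * M) / T :=
        abs_riemannSum_sub_setIntegral_le (F := fun u => f ((u - x) / h)) hT ha hb hF
          (fun u => hfM' _) fun i _ u hu => abs_comp_sub_comp_le_gridWeight hsupp hfM' hf hT hh hu
    _ ≤ (2 * L * Λ + 16 * M) / T := div_le_div_of_nonneg_right (by linarith) T.cast_nonneg

theorem exists_abs_riemannSum_mul_comp_sub_setIntegral_le {φ ψ : ℝ → ℝ} {Λ : ℝ≥0}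
    (hL : 0 ≤ L) (hsupp : support φ ⊆ Icc (-L) L) (hφ : LipschitzOnWith Λ φ (Icc (-L) L))
    (hψ : LocallyLipschitz ψ) :
    ∃ C, ∀ T : ℕ, 0 < T → ∀ h x a b : ℝ, 0 < h → 0 ≤ a → b ≤ 1 →
      |(T : ℝ)⁻¹ * ∑ i ∈ (Finset.Icc 1 T).filter (fun i : ℕ => (i : ℝ) / T ∈ Icc a b),
          φ (((i : ℝ) / T - x) / h) * ψ (((i : ℝ) / T - x) / h) -
        ∫ u in Icc a b, φ ((u - x) / h) * ψ ((u - x) / h)| ≤ C / T := by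
  obtain ⟨Λψ, hψ'⟩ := hψ.locallyLipschitzOn.exists_lipschitzOnWith_of_compact isCompact_Icc
  obtain ⟨Λf, hf⟩ := isCompact_Icc.exists_lipschitzOnWith_mul hφ hψ'
  obtain ⟨M, hM⟩ := isCompact_Icc.exists_bound_of_continuousOn hf.continuousOn
  exact ⟨2 * L * Λf + 16 * M, fun T hT h x a b hh ha hb => abs_riemannSum_comp_sub_setIntegral_le
    hL ((support_mul_subset_left _ _).trans hsupp) hM hf hT hh ha hb⟩

end Kernel

/-- In the statement of `riemann_sum_kernel_approx` the summation variable `i` is real, so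
`Finset.Icc 1 T` is coerced to `Finset ℝ` through the `Finset` monad. -/
lemma sum_filter_bind_natCast (T : ℕ) (p : ℝ → Prop) [DecidablePred p] (F : ℝ → ℝ) :
    ∑ r ∈ (do let i ← Finset.Icc 1 T; pure (i : ℝ)) with p r, F r =
      ∑ i ∈ (Finset.Icc 1 T).filter (fun i : ℕ => p i), F i := by
  have himage : (do let i ← Finset.Icc 1 T; pure (i : ℝ)) = (Finset.Icc 1 T).image (↑) := by
    ext r
    simp [Finset.mem_image]
  rw [himage, Finset.filter_image, Finset.sum_image fun _ _ _ _ h => Nat.cast_injective h]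

theorem riemann_sum_kernel_approx_general
    (K : ℝ → ℝ) (Λ₁ L₁ : ℝ) (h : ℕ → ℝ)
    (hLpos : 0 < L₁)
    (hsupp : ∀ u, L₁ < |u| → K u = 0)
    (hlip : ∀ u ∈ Set.Icc (-L₁) L₁, ∀ u' ∈ Set.Icc (-L₁) L₁,
      |K u - K u'| ≤ Λ₁ * |u - u'|)
    (g : ℝ → ℝ) (Lg : NNReal)
    (hg : LipschitzOnWith Lg g (Set.range K)) (hg0 : g 0 = 0)
    (hpos : ∀ T, 0 < h T)
    (j : ℕ) (a b : ℝ) (ha : 0 ≤ a) (hb1 : b ≤ 1) :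
    ∃ C : ℝ, ∃ T₀ : ℕ, ∀ T ≥ T₀, ∀ x ∈ Set.Icc (0 : ℝ) 1,
      |(T : ℝ)⁻¹ * ∑ i ∈ (Finset.Icc 1 T).filter (fun i => (i : ℝ) / T ∈ Set.Icc a b),
          g (K (((i : ℝ) / T - x) / h T)) * (((i : ℝ) / T - x) / h T) ^ j -
        ∫ u in Set.Icc a b, g (K ((u - x) / h T)) * ((u - x) / h T) ^ j| ≤ C / T ∧
      |(T : ℝ)⁻¹ * ∑ i ∈ (Finset.Icc 1 T).filter (fun i => (i : ℝ) / T ∈ Set.Icc a b),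
          g (K (((i : ℝ) / T - x) / h T)) * |((i : ℝ) / T - x) / h T| ^ j -
        ∫ u in Set.Icc a b, g (K ((u - x) / h T)) * |(u - x) / h T| ^ j| ≤ C / T := by
  have hK : LipschitzOnWith Λ₁.toNNReal K (Icc (-L₁) L₁) := LipschitzOnWith.of_dist_le' hlip
  have hgK := hg.comp hK (mapsTo_range K _)
  have hsupp_gK : support (g ∘ K) ⊆ Icc (-L₁) L₁ := (support_comp_subset hg0 K).trans
    fun u hu => abs_le.1 (not_lt.1 (mt (hsupp u) hu))
  have hpow : LocallyLipschitz fun t : ℝ => t ^ j :=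
    ContDiff.locallyLipschitz (𝕂 := ℝ) (contDiff_id.pow j)
  obtain ⟨C₁, hC₁⟩ := exists_abs_riemannSum_mul_comp_sub_setIntegral_le hLpos.le hsupp_gK hgK hpow
  obtain ⟨C₂, hC₂⟩ := exists_abs_riemannSum_mul_comp_sub_setIntegral_le hLpos.le hsupp_gK hgK
    (hpow.comp lipschitzWith_one_norm.locallyLipschitz)
  refine ⟨max C₁ C₂, 1, fun T hT x _ => ?_⟩
  rw [sum_filter_bind_natCast, sum_filter_bind_natCast]
  exact ⟨(hC₁ T hT (h T) x a b (hpos T) ha hb1).trans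
      (div_le_div_of_nonneg_right (le_max_left _ _) T.cast_nonneg),
    (hC₂ T hT (h T) x a b (hpos T) ha hb1).trans
      (div_le_div_of_nonneg_right (le_max_right _ _) T.cast_nonneg)⟩

/-- Uniform approximation of integrals by Riemann sums over the fixed design
`i/T`, for Lipschitz transformations `f = g ∘ K` of a compactly supported
Lipschitz kernel `K` (Assumption A.2′), with polynomial factor of order `j`:
both the signed and the absolute-value versions hold with error `C/T`,
uniformly in `x ∈ [0,1]`. -/
theorem riemann_sum_kernel_approx
    (K : ℝ → ℝ) (Kbar μb Λ₁ L₁ : ℝ) (h : ℕ → ℝ)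
    (hKbd : ∀ u, |K u| ≤ Kbar)
    (hKint : (∫ u, |K u|) ≤ μb)
    (hΛpos : 0 < Λ₁) (hLpos : 0 < L₁)
    (hsupp : ∀ u, L₁ < |u| → K u = 0)
    (hlip : ∀ u ∈ Set.Icc (-L₁) L₁, ∀ u' ∈ Set.Icc (-L₁) L₁,
      |K u - K u'| ≤ Λ₁ * |u - u'|)
    (g : ℝ → ℝ) (Lg : NNReal)
    (hg : LipschitzOnWith Lg g (Set.range K)) (hg0 : g 0 = 0)
    (hpos : ∀ T, 0 < h T)
    (h0 : Tendsto h atTop (nhds 0))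
    (hTh : Tendsto (fun T : ℕ => (T : ℝ) * h T) atTop atTop)
    (j : ℕ) (a b : ℝ) (ha : 0 ≤ a) (hab : a ≤ b) (hb1 : b ≤ 1) :
    ∃ C : ℝ, ∃ T₀ : ℕ, ∀ T ≥ T₀, ∀ x ∈ Set.Icc (0 : ℝ) 1,
      |(T : ℝ)⁻¹ * ∑ i ∈ (Finset.Icc 1 T).filter (fun i => (i : ℝ) / T ∈ Set.Icc a b),
          g (K (((i : ℝ) / T - x) / h T)) * (((i : ℝ) / T - x) / h T) ^ j -
        ∫ u in Set.Icc a b, g (K ((u - x) / h T)) * ((u - x) / h T) ^ j| ≤ C / T ∧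
      |(T : ℝ)⁻¹ * ∑ i ∈ (Finset.Icc 1 T).filter (fun i => (i : ℝ) / T ∈ Set.Icc a b),
          g (K (((i : ℝ) / T - x) / h T)) * |((i : ℝ) / T - x) / h T| ^ j -
        ∫ u in Set.Icc a b, g (K ((u - x) / h T)) * |(u - x) / h T| ^ j| ≤ C / T :=
  riemann_sum_kernel_approx_general K Λ₁ L₁ h hLpos hsupp hlip g Lg hg hg0 hpos j a b ha hb1
end

section
/- Let K ≥ 0 satisfy Assumption A.2 with support normalized to L₁ = 1, and suppose the Lebesgue measure of {u ∈ G_x : K(u) > 0} is positive for every x ∈ [0,1]. Let S_{T,x} be the 2×2 matrix with entries s_{T,p+q}(x) = (Th)^{-1} Σ_{t=1}^T ((t/T − x)/h)^{p+q} K((t/T − x)/h), p,q ∈ {0,1}. Then there exist λ₀ > 0 and T₀ < ∞ such that min_{x∈[0,1]} λ_min(S_{T,x}) ≥ λ₀ for all T ≥ T₀, where λ_min denotes the smallest eigenvalue. -/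
/-!
For a unit vector `(a, b)` the quadratic form of `S_{T,x}` is the Riemann sum
`(Th)⁻¹ ∑ₜ (a + b wₜ)² K(wₜ)` over the rescaled design points `wₜ = (t/T - x)/h`, which have
spacing `Δ = (Th)⁻¹`. Once `h ≤ 1/4`, one of the windows `(0, 1]` (if `x ≤ 1/2`) or `(-1, 0]`
(if `x > 1/2`) is mapped into `(0, 1]` by `u ↦ x + h u`, so every point of it lies within `Δ`
to the left of some `wₜ`. Positivity of `{K > 0}` on `Gdom 0` and `Gdom 1` gives fixed `ε, δ > 0`
with `|{K ≥ ε}| ≥ δ` on both windows. Discarding the points within `η + Δ` of the root of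
`a + b u` (measure `O(η + Δ)`), each remaining point of `{K ≥ ε}` lies next to a grid point with
`K(wₜ) ≥ ε/2` (Lipschitz) and `|a + b wₜ| ≥ η`; these grid points number at least `δ/(2Δ)`,
so the quadratic form is at least `(δ/2) η² (ε/2)`.
-/

open Filter Set MeasureTheory

/-- The limiting integration domain at `x`. -/
noncomputable def Gdom (x : ℝ) : Set ℝ :=
  if x = 0 then Set.Icc 0 1 else if x = 1 then Set.Icc (-1) 0 else Set.Icc (-1) 1

/-- The 2×2 local linear design matrix `S_{T,x}` with entries
`s_{T,p+q}(x) = (Th)⁻¹ Σ_t ((t/T−x)/h)^{p+q} K((t/T−x)/h)`. -/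
noncomputable def Sdesign (K : ℝ → ℝ) (h : ℝ) (T : ℕ) (x : ℝ) :
    Matrix (Fin 2) (Fin 2) ℝ :=
  Matrix.of fun p q => ((T : ℝ) * h)⁻¹ * ∑ t ∈ Finset.Icc 1 T,
    (((t : ℝ) / T - x) / h) ^ ((p : ℕ) + (q : ℕ)) * K (((t : ℝ) / T - x) / h)

open Matrix Topology

theorem eventually_volume_level_pos {K : ℝ → ℝ} {G : Set ℝ}
    (hG : 0 < volume {u ∈ G | 0 < K u}) :
    ∀ᶠ ε in 𝓝[>] 0, 0 < volume {u ∈ G | ε ≤ K u} := by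
  obtain ⟨n, hn⟩ : ∃ n : ℕ, 0 < volume {u ∈ G | 1 / ((n : ℝ) + 1) ≤ K u} := by
    by_contra! hnull
    have hcover : {u ∈ G | 0 < K u} ⊆ ⋃ n : ℕ, {u ∈ G | 1 / ((n : ℝ) + 1) ≤ K u} := by
      rintro u ⟨huG, huK⟩
      obtain ⟨n, hn⟩ := exists_nat_one_div_lt huK
      exact mem_iUnion.2 ⟨n, huG, hn.le⟩
    exact hG.ne' (measure_mono_null hcover
      (measure_iUnion_null fun n => nonpos_iff_eq_zero.1 (hnull n)))
  filter_upwards [Ioc_mem_nhdsGT Nat.one_div_pos_of_nat] with ε hε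
  exact hn.trans_le (measure_mono fun u hu => ⟨hu.1, hε.2.trans hu.2⟩)

theorem exists_level_volume_lower_bound {ι : Type*} [Finite ι] (K : ℝ → ℝ)
    (G : ι → Set ℝ) (hG : ∀ i, 0 < volume {u ∈ G i | 0 < K u}) :
    ∃ ε > 0, ∃ δ > 0, ∀ i, ENNReal.ofReal δ ≤ volume {u ∈ G i | ε ≤ K u} := by
  obtain ⟨ε, hεK, hε⟩ :=
    ((eventually_all.2 fun i => eventually_volume_level_pos (hG i)).and self_mem_nhdsWithin).exists
  have hsmall : ∀ i, ∀ᶠ δ in 𝓝[>] 0, ENNReal.ofReal δ < volume {u ∈ G i | ε ≤ K u} :=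
    fun i =>
      ((ENNReal.continuous_ofReal.tendsto' 0 0 ENNReal.ofReal_zero).mono_left
        nhdsWithin_le_nhds).eventually (gt_mem_nhds (hεK i))
  obtain ⟨δ, hδK, hδ⟩ := ((eventually_all.2 hsmall).and self_mem_nhdsWithin).exists
  exact ⟨ε, hε, δ, hδ, fun i => (hδK i).le⟩

theorem Matrix.le_of_mem_spectrum_of_le_dotProduct_mulVec {n : Type*} [Fintype n]
    [DecidableEq n] {M : Matrix n n ℝ} {c μ : ℝ} (hM : ∀ v, v ⬝ᵥ v = 1 → c ≤ v ⬝ᵥ M *ᵥ v)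
    (hμ : μ ∈ spectrum ℝ M) : c ≤ μ := by
  rw [← spectrum_toLin', ← Module.End.hasEigenvalue_iff_mem_spectrum] at hμ
  obtain ⟨v, hv⟩ := hμ.exists_hasEigenvector
  have hMv : M *ᵥ v = μ • v := by simpa using hv.apply_eq_smul
  have hvv : 0 < v ⬝ᵥ v := by simpa using dotProduct_self_star_pos_iff.2 hv.2
  set r := √(v ⬝ᵥ v)
  have hr : r ^ 2 = v ⬝ᵥ v := Real.sq_sqrt hvv.le
  have hscale : ∀ w, (r⁻¹ • v) ⬝ᵥ (r⁻¹ • w) = v ⬝ᵥ w / v ⬝ᵥ v := fun w => by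
    simp only [smul_dotProduct, dotProduct_smul, smul_eq_mul, ← hr]
    field_simp
  have key := hM (r⁻¹ • v) (by rw [hscale, div_self hvv.ne'])
  rwa [mulVec_smul, hscale, hMv, dotProduct_smul, smul_eq_mul, mul_div_assoc,
    div_self hvv.ne', mul_one] at key

noncomputable def designPoint (T : ℕ) (h x : ℝ) (t : ℕ) : ℝ := ((t : ℝ) / T - x) / h

noncomputable def designQuadForm (K : ℝ → ℝ) (T : ℕ) (h x a b : ℝ) : ℝ :=
  ((T : ℝ) * h)⁻¹ * ∑ t ∈ Finset.Icc 1 T,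
    (a + b * designPoint T h x t) ^ 2 * K (designPoint T h x t)

theorem dotProduct_Sdesign_mulVec (K : ℝ → ℝ) (h : ℝ) (T : ℕ) (x : ℝ)
    (v : Fin 2 → ℝ) :
    v ⬝ᵥ Sdesign K h T x *ᵥ v = designQuadForm K T h x (v 0) (v 1) := by
  simp only [dotProduct, mulVec, Sdesign, of_apply, Fin.sum_univ_two, Fin.isValue, Fin.val_zero,
    Fin.val_one, Finset.mul_sum, Finset.sum_mul, ← Finset.sum_add_distrib, designQuadForm,
    designPoint]
  exact Finset.sum_congr rfl fun t _ => by ring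

theorem exists_designPoint_mem_Ioc {T : ℕ} {h x u : ℝ} (hT : 0 < T) (hh : 0 < h)
    (hu : x + h * u ∈ Ioc 0 1) :
    ∃ t ∈ Finset.Icc 1 T,
      u ∈ Ioc (designPoint T h x t - ((T : ℝ) * h)⁻¹) (designPoint T h x t) := by
  set c := (T : ℝ) * (x + h * u)
  have hT' : (0 : ℝ) < T := Nat.cast_pos.2 hT
  have hc : 0 < c := mul_pos hT' hu.1
  refine ⟨⌈c⌉₊, Finset.mem_Icc.2 ⟨Nat.one_le_ceil_iff.2 hc, Nat.ceil_le.2 ?_⟩, ?_⟩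
  · simpa [c] using mul_le_mul_of_nonneg_left hu.2 hT'.le
  have hgap : designPoint T h x ⌈c⌉₊ - u = (⌈c⌉₊ - c) / (T * h) := by
    simp only [designPoint, c]; field_simp; ring
  have hceil : (⌈c⌉₊ : ℝ) - c < 1 := by linarith [Nat.ceil_lt_add_one hc.le]
  constructor
  · have : designPoint T h x ⌈c⌉₊ - u < ((T : ℝ) * h)⁻¹ := by
      rw [hgap, ← one_div]; gcongr
    linarith
  · have : 0 ≤ designPoint T h x ⌈c⌉₊ - u := by
      rw [hgap]; exact div_nonneg (by linarith [Nat.le_ceil c]) (by positivity)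
    linarith

theorem exists_good_designPoint {K : ℝ → ℝ} {Λ ε η h x a b u : ℝ} {T : ℕ}
    (hΛ : 0 ≤ Λ) (hlip : ∀ u u', |K u - K u'| ≤ Λ * |u - u'|) (hT : 0 < T) (hh : 0 < h)
    (hΛΔ : Λ * ((T : ℝ) * h)⁻¹ ≤ ε / 2) (hb : |b| ≤ 1) (hu : x + h * u ∈ Ioc 0 1)
    (hKu : ε ≤ K u) (hroot : η + ((T : ℝ) * h)⁻¹ ≤ |a + b * u|) :
    ∃ t ∈ Finset.Icc 1 T,
      (ε / 2 ≤ K (designPoint T h x t) ∧ η ≤ |a + b * designPoint T h x t|) ∧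
      u ∈ Ioc (designPoint T h x t - ((T : ℝ) * h)⁻¹) (designPoint T h x t) := by
  obtain ⟨t, ht, hut⟩ := exists_designPoint_mem_Ioc hT hh hu
  set w := designPoint T h x t
  have hdist : |u - w| ≤ ((T : ℝ) * h)⁻¹ := by
    rw [abs_sub_comm, abs_of_nonneg] <;> linarith [hut.1, hut.2]
  refine ⟨t, ht, ⟨?_, ?_⟩, hut⟩
  · nlinarith [(abs_le.1 (hlip u w)).2]
  · have hshift : |a + b * u - (a + b * w)| ≤ ((T : ℝ) * h)⁻¹ := by
      rw [show a + b * u - (a + b * w) = b * (u - w) by ring, abs_mul]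
      nlinarith [abs_nonneg b, abs_nonneg (u - w)]
    linarith [abs_sub_abs_le_abs_sub (a + b * u) (a + b * w)]

theorem volume_le_card_mul_add_volume_inter {ι : Type*} {F B : Set ℝ} {S : Finset ι}
    {w : ι → ℝ} {Δ : ℝ} (hcover : F \ B ⊆ ⋃ t ∈ S, Ioc (w t - Δ) (w t)) :
    volume F ≤ ENNReal.ofReal (S.card * Δ) + volume (F ∩ B) := calc
  volume F = volume (F \ B ∪ F ∩ B) := by rw [sdiff_union_inter]
  _ ≤ ∑ t ∈ S, volume (Ioc (w t - Δ) (w t)) + volume (F ∩ B) :=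
    (measure_union_le _ _).trans
      (add_le_add_left ((measure_mono hcover).trans (measure_biUnion_finset_le _ _)) _)
  _ = ENNReal.ofReal (S.card * Δ) + volume (F ∩ B) := by
    simp [Real.volume_Ioc, ENNReal.ofReal_mul]

theorem volume_abs_affine_lt_le {a b r : ℝ} (hab : a ^ 2 + b ^ 2 = 1) :
    volume {u ∈ Icc (-1) 1 | |a + b * u| < r} ≤ ENNReal.ofReal (8 * r) := by
  rcases lt_or_ge (1 / 4) r with hr | hr
  · calc volume {u ∈ Icc (-1) 1 | |a + b * u| < r} ≤ volume (Icc (-1 : ℝ) 1) :=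
          measure_mono (sep_subset _ _)
      _ ≤ ENNReal.ofReal (8 * r) := by rw [Real.volume_Icc]; gcongr; linarith
  rcases lt_or_ge |b| (1 / 2) with hb | hb
  -- then `a ^ 2 > 3/4`, so `a + b * u` stays away from `0` on `[-1, 1]`
  · suffices hempty : {u ∈ Icc (-1) 1 | |a + b * u| < r} = ∅ by
      rw [hempty, measure_empty]; exact zero_le
    refine eq_empty_of_forall_notMem fun u ⟨hu, hlt⟩ => ?_
    have hbu : |b * u| < 1 / 2 := by
      rw [abs_mul]; nlinarith [abs_le.2 hu, abs_nonneg b, abs_nonneg u]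
    obtain ⟨hbu₁, hbu₂⟩ := abs_lt.1 hbu
    obtain ⟨hlt₁, hlt₂⟩ := abs_lt.1 hlt
    obtain ⟨hb₁, hb₂⟩ := abs_lt.1 hb
    nlinarith
  · have hb0 : 0 < |b| := by linarith
    calc volume {u ∈ Icc (-1) 1 | |a + b * u| < r}
        ≤ volume (Metric.ball (-a / b) (r / |b|)) := by
          refine measure_mono fun u hu => ?_
          rw [Metric.mem_ball, Real.dist_eq, lt_div_iff₀ hb0, ← abs_mul, sub_mul,
            div_mul_cancel₀ _ (abs_pos.1 hb0)]
          simpa [add_comm, mul_comm] using hu.2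
      _ ≤ ENNReal.ofReal (8 * r) := by
          rw [Real.volume_ball, ENNReal.ofReal_le_ofReal_iff']
          rcases le_or_gt r 0 with hr0 | hr0
          · exact Or.inr (by have := div_nonpos_of_nonpos_of_nonneg hr0 hb0.le; linarith)
          · left
            rw [mul_div_assoc', div_le_iff₀ hb0]
            nlinarith

theorem le_designQuadForm {K : ℝ → ℝ} {Λ ε δ h x a b : ℝ} {T : ℕ} {F : Set ℝ}
    (hK : ∀ u, 0 ≤ K u) (hΛ : 0 ≤ Λ) (hlip : ∀ u u', |K u - K u'| ≤ Λ * |u - u'|)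
    (hε : 0 < ε) (hδ : 0 < δ) (hh : 0 < h)
    (hFK : ∀ u ∈ F, ε ≤ K u) (hF : ∀ u ∈ F, u ∈ Icc (-1) 1 ∧ x + h * u ∈ Ioc 0 1)
    (hFδ : ENNReal.ofReal δ ≤ volume F)
    (hThΛ : 2 * Λ / ε ≤ T * h) (hThδ : 32 / δ ≤ T * h) (hab : a ^ 2 + b ^ 2 = 1) :
    δ / 2 * ((δ / 32) ^ 2 * (ε / 2)) ≤ designQuadForm K T h x a b := by
  set Δ := ((T : ℝ) * h)⁻¹
  -- `η = δ / 32` makes the near-root set `B` below have measure at most `8 (η + Δ) ≤ δ / 2`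
  set η := δ / 32
  set w := designPoint T h x
  have hTh : 0 < (T : ℝ) * h := (by positivity : 0 < 32 / δ).trans_le hThδ
  have hT : 0 < T := Nat.cast_pos.1 (pos_of_mul_pos_left hTh hh.le)
  have hΔ : 0 < Δ := inv_pos.2 hTh
  have hΔη : Δ ≤ η := by simpa only [inv_div] using inv_anti₀ (by positivity) hThδ
  have hΛΔ : Λ * Δ ≤ ε / 2 := by
    rw [div_le_iff₀ hε] at hThΛ
    rw [← div_eq_mul_inv, div_le_iff₀ hTh]
    linarith
  have hb : |b| ≤ 1 := abs_le_one_iff_mul_self_le_one.2 (by nlinarith)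
  set S := (Finset.Icc 1 T).filter fun t => ε / 2 ≤ K (w t) ∧ η ≤ |a + b * w t|
  set B := {u : ℝ | |a + b * u| < η + Δ}
  have hcover : F \ B ⊆ ⋃ t ∈ S, Ioc (w t - Δ) (w t) := by
    rintro u ⟨huF, huB⟩
    obtain ⟨t, ht, hgood, hut⟩ := exists_good_designPoint hΛ hlip hT hh hΛΔ hb (hF u huF).2
      (hFK u huF) (not_lt.1 huB)
    exact mem_biUnion (Finset.mem_filter.2 ⟨ht, hgood⟩) hut
  have hbad : volume (F ∩ B) ≤ ENNReal.ofReal (δ / 2) := calc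
    volume (F ∩ B) ≤ volume {u ∈ Icc (-1) 1 | |a + b * u| < η + Δ} :=
      measure_mono fun u hu => ⟨(hF u hu.1).1, hu.2⟩
    _ ≤ ENNReal.ofReal (δ / 2) :=
      (volume_abs_affine_lt_le hab).trans (by gcongr; linarith [show η = δ / 32 from rfl])
  have hcard : δ / 2 ≤ S.card * Δ := by
    have : ENNReal.ofReal δ ≤ ENNReal.ofReal (S.card * Δ) + ENNReal.ofReal (δ / 2) :=
      hFδ.trans ((volume_le_card_mul_add_volume_inter hcover).trans (by gcongr))
    rw [← ENNReal.ofReal_add (by positivity) (by positivity),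
      ENNReal.ofReal_le_ofReal_iff (by positivity)] at this
    linarith
  have hsum :
      S.card * (η ^ 2 * (ε / 2)) ≤ ∑ t ∈ Finset.Icc 1 T, (a + b * w t) ^ 2 * K (w t) := by
    refine le_trans ?_ (Finset.sum_le_sum_of_subset_of_nonneg (Finset.filter_subset _ _)
      fun t _ _ => mul_nonneg (sq_nonneg _) (hK _) : ∑ t ∈ S, _ ≤ _)
    rw [← nsmul_eq_mul]
    refine Finset.card_nsmul_le_sum _ _ _ fun t ht => ?_
    obtain ⟨-, hKt, hroot⟩ := Finset.mem_filter.1 ht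
    exact mul_le_mul (by simpa only [sq_abs] using pow_le_pow_left₀ (by positivity) hroot 2)
      hKt (by positivity) (sq_nonneg _)
  calc δ / 2 * (η ^ 2 * (ε / 2)) ≤ S.card * Δ * (η ^ 2 * (ε / 2)) := by gcongr
    _ = Δ * (S.card * (η ^ 2 * (ε / 2))) := by ring
    _ ≤ designQuadForm K T h x a b := by unfold designQuadForm; gcongr

theorem volume_sep_Ioc_eq_Icc (a b : ℝ) (p : ℝ → Prop) :
    volume {u ∈ Ioc a b | p u} = volume {u ∈ Icc a b | p u} :=
  measure_congr (Ioc_ae_eq_Icc.inter (EventuallyEq.refl _ {u | p u}))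

-- Half-open so that `x + h * u > 0` on the window even when `x = 0`.
def window (i : Fin 2) : Set ℝ := Ioc ((i : ℕ) - 1 : ℝ) (i : ℕ)

theorem volume_window_level_pos {K : ℝ → ℝ}
    (hK : ∀ x ∈ Icc (0 : ℝ) 1, 0 < volume {u ∈ Gdom x | 0 < K u}) :
    ∀ i, 0 < volume {u ∈ window i | 0 < K u} := by
  refine Fin.forall_fin_two.2 ⟨?_, ?_⟩
  · rw [show window 0 = Ioc (-1) 0 by norm_num [window], volume_sep_Ioc_eq_Icc]
    simpa [Gdom] using hK 1 (by norm_num)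
  · rw [show window 1 = Ioc 0 1 by norm_num [window], volume_sep_Ioc_eq_Icc]
    simpa [Gdom] using hK 0 (by norm_num)

theorem exists_window {x h : ℝ} (hx : x ∈ Icc 0 1) (hh : 0 < h) (hh' : h ≤ 1 / 4) :
    ∃ i, ∀ u ∈ window i, u ∈ Icc (-1) 1 ∧ x + h * u ∈ Ioc 0 1 := by
  rcases le_or_gt x (1 / 2) with hx2 | hx2
  · refine ⟨1, fun u ⟨hu₁, hu₂⟩ => ?_⟩
    simp only [Fin.val_one, Nat.cast_one, sub_self] at hu₁ hu₂
    exact ⟨⟨by linarith, hu₂⟩, by nlinarith [hx.1], by nlinarith⟩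
  · refine ⟨0, fun u ⟨hu₁, hu₂⟩ => ?_⟩
    simp only [Fin.val_zero, Nat.cast_zero, zero_sub] at hu₁ hu₂
    exact ⟨⟨hu₁.le, by linarith⟩, by nlinarith, by nlinarith [hx.2]⟩

theorem design_matrix_eigenvalue_lower_bound_general
    (K : ℝ → ℝ) (Λ₁ : ℝ) (h : ℕ → ℝ)
    (hKnn : ∀ u, 0 ≤ K u)
    (hΛ : 1 ≤ Λ₁)
    (hlip : ∀ u u' : ℝ, |K u - K u'| ≤ Λ₁ * |u - u'|)
    (hposset : ∀ x ∈ Set.Icc (0 : ℝ) 1, 0 < volume {u ∈ Gdom x | 0 < K u})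
    (hpos : ∀ T, 0 < h T)
    (h0 : Tendsto h atTop (nhds 0))
    (hTh : Tendsto (fun T : ℕ => (T : ℝ) * h T) atTop atTop) :
    ∃ lam₀ : ℝ, 0 < lam₀ ∧ ∃ T₀ : ℕ, ∀ T ≥ T₀, ∀ x ∈ Set.Icc (0 : ℝ) 1,
      ∀ t ∈ spectrum ℝ (Sdesign K (h T) T x), lam₀ ≤ t := by
  obtain ⟨ε, hε, δ, hδ, hF⟩ :=
    exists_level_volume_lower_bound K window (volume_window_level_pos hposset)
  obtain ⟨T₀, hT₀⟩ := eventually_atTop.1 <|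
    (h0.eventually (eventually_le_nhds (by norm_num : (0 : ℝ) < 1 / 4))).and <|
      (hTh.eventually_ge_atTop (2 * Λ₁ / ε)).and (hTh.eventually_ge_atTop (32 / δ))
  refine ⟨δ / 2 * ((δ / 32) ^ 2 * (ε / 2)), by positivity, T₀, fun T hT x hx μ hμ => ?_⟩
  obtain ⟨hh, hThΛ, hThδ⟩ := hT₀ T hT
  obtain ⟨i, hi⟩ := exists_window hx (hpos T) hh
  refine le_of_mem_spectrum_of_le_dotProduct_mulVec (fun v hv => ?_) hμ
  rw [dotProduct_Sdesign_mulVec]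
  exact le_designQuadForm hKnn (by linarith) hlip hε hδ (hpos T) (fun u hu => hu.2)
    (fun u hu => hi u hu.1) (hF i) hThΛ hThδ
    (by simpa [dotProduct, Fin.sum_univ_two, sq] using hv)

/-- Uniform lower bound on the smallest eigenvalue of the design matrices:
there are `λ₀ > 0` and `T₀` such that, for all `T ≥ T₀` and every `x ∈ [0,1]`,
every (real) eigenvalue of `S_{T,x}` is at least `λ₀`. -/
theorem design_matrix_eigenvalue_lower_bound
    (K : ℝ → ℝ) (Kbar μb Λ₁ s : ℝ) (h : ℕ → ℝ)
    (hs : 2 < s)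
    (hKnn : ∀ u, 0 ≤ K u)
    (hKbd : ∀ u, |K u| ≤ Kbar)
    (hKint : (∫ u, |K u| ^ s) ≤ μb)
    (hΛ : 1 ≤ Λ₁)
    (hsupp : ∀ u : ℝ, 1 < |u| → K u = 0)
    (hlip : ∀ u u' : ℝ, |K u - K u'| ≤ Λ₁ * |u - u'|)
    (hposset : ∀ x ∈ Set.Icc (0 : ℝ) 1, 0 < volume {u ∈ Gdom x | 0 < K u})
    (hpos : ∀ T, 0 < h T)
    (h0 : Tendsto h atTop (nhds 0))
    (hTh : Tendsto (fun T : ℕ => (T : ℝ) * h T) atTop atTop) :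
    ∃ lam₀ : ℝ, 0 < lam₀ ∧ ∃ T₀ : ℕ, ∀ T ≥ T₀, ∀ x ∈ Set.Icc (0 : ℝ) 1,
      ∀ t ∈ spectrum ℝ (Sdesign K (h T) T x), lam₀ ≤ t :=
  design_matrix_eigenvalue_lower_bound_general K Λ₁ h hKnn hΛ hlip hposset hpos h0 hTh
end
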